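/- arXiv:1909.01629 — 8 statements merged into one kernel-verified Lean document; each statement's English description precedes it below -/
import Mathlib

section
/- Let A3, A4, B3, B4, C, D be positive reals and suppose A3 − A4 > 0 and A3 − A4 > A3·A4·C·(B3 − B4) (the global condition). If X⋆ ∈ (0, C] satisfies A3·X⋆/(1 + A3·B3·X⋆) = D, then A3 − A4 > D·(A3·B3 − A4·B4) (the local condition). -/
theorem stmt_2 (A3 A4 B3 B4 C D X : ℝ)
    (hA3 : 0 < A3) (hA4 : 0 < A4) (hB3 : 0 < B3) (hB4 : 0 < B4)
    (hC : 0 < C) (hD : 0 < D)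
    (hglob1 : A3 - A4 > 0) (hglob2 : A3 - A4 > A3 * A4 * C * (B3 - B4))
    (hX1 : 0 < X) (hX2 : X ≤ C)
    (heq : A3 * X / (1 + A3 * B3 * X) = D) :
    A3 - A4 > D * (A3 * B3 - A4 * B4) := by
  have hden : 0 < 1 + A3 * B3 * X := by positivity
  have heq' : A3 * X = D * (1 + A3 * B3 * X) := by
    field_simp at heq; linarith
  have key : A3 - A4 > A3 * A4 * X * (B3 - B4) := by
    rcases le_or_gt B4 B3 with h | h
    · nlinarith [mul_le_mul_of_nonneg_left hX2 (le_of_lt (mul_pos hA3 hA4)),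
        sub_nonneg.mpr h]
    · nlinarith [mul_pos (mul_pos hA3 hA4) hX1]
  nlinarith [mul_pos hD (mul_pos hA3 (mul_pos hB3 hX1))]
end

section
/- Let a1, b1 > 0 and 0 < x⋆ < 1, 0 < c < 1, 0 < k < 1, b2 > 0. Define s = (1−x⋆)/((1+b2·x⋆)·(1+a1/(1+b1·x⋆))) − (c−x⋆)/(1+b2·x⋆). Then the inequality 2·k·s + (1 − k/(1+b2·x⋆))·x⋆ + k·c/(1+b2·x⋆) < √(((1−k/(1+b2·x⋆))·x⋆ + k·c/(1+b2·x⋆))² + 4·x⋆·k·(1−c)/(1+b2·x⋆)) is equivalent to k·s < x⋆·a1/(1+b1·x⋆). -/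
lemma aux_sqrt_equiv (u B d T C : ℝ) (hC : 0 < C) (hB : 0 < B) (hT : 0 < T)
    (hd : 0 < d) (hkey : (2*u + B)^2 - (B^2 + d) = 4*C*(u - T)) :
    2*u + B < Real.sqrt (B^2 + d) ↔ u < T := by
  have hD : (0:ℝ) < B^2 + d := by positivity
  constructor
  · intro h
    rcases le_or_gt 0 (2*u + B) with hL | hL
    · have h2 : (2*u + B)^2 < B^2 + d := by
        have hs := Real.sq_sqrt hD.le
        nlinarith [Real.sqrt_nonneg (B^2 + d)]
      by_contra hcon
      push_neg at hcon
      nlinarith [mul_nonneg hC.le (sub_nonneg.mpr hcon)]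
    · nlinarith
  · intro h
    rcases le_or_gt 0 (2*u + B) with hL | hL
    · have h2 : (2*u + B)^2 < B^2 + d := by
        nlinarith [mul_pos hC (show 0 < T - u by linarith)]
      have := (Real.lt_sqrt hL).mpr h2
      linarith
    · exact lt_of_lt_of_le hL (Real.sqrt_nonneg _)

theorem stmt_8 (a1 b1 b2 c k x : ℝ)
    (ha1 : 0 < a1) (hb1 : 0 < b1) (hb2 : 0 < b2)
    (hx : 0 < x) (hx1 : x < 1) (hc : 0 < c) (hc1 : c < 1)
    (hk : 0 < k) (hk1 : k < 1) :
    (2 * k * ((1 - x) / ((1 + b2 * x) * (1 + a1 / (1 + b1 * x))) -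
        (c - x) / (1 + b2 * x)) +
      (1 - k / (1 + b2 * x)) * x + k * c / (1 + b2 * x) <
      Real.sqrt (((1 - k / (1 + b2 * x)) * x + k * c / (1 + b2 * x)) ^ 2 +
        4 * x * k * (1 - c) / (1 + b2 * x))) ↔
    k * ((1 - x) / ((1 + b2 * x) * (1 + a1 / (1 + b1 * x))) -
        (c - x) / (1 + b2 * x)) <
      x * a1 / (1 + b1 * x) := by
  have hQ : (0:ℝ) < 1 + b2 * x := by positivity
  have hP : (0:ℝ) < 1 + b1 * x := by positivity
  have hA : (0:ℝ) < 1 + a1 / (1 + b1 * x) := by positivity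
  set S : ℝ := (1 - x) / ((1 + b2 * x) * (1 + a1 / (1 + b1 * x))) -
      (c - x) / (1 + b2 * x) with hS
  set B : ℝ := (1 - k / (1 + b2 * x)) * x + k * c / (1 + b2 * x) with hB
  have hkQ : k / (1 + b2 * x) < 1 := (div_lt_one hQ).mpr (by nlinarith)
  have hBpos : 0 < B := by
    have h1 : 0 < (1 - k / (1 + b2 * x)) * x :=
      mul_pos (by linarith) hx
    have h2 : 0 < k * c / (1 + b2 * x) := div_pos (mul_pos hk hc) hQ
    rw [hB]; linarith
  have hT : 0 < x * a1 / (1 + b1 * x) := div_pos (mul_pos hx ha1) hP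
  have hd : 0 < 4 * x * k * (1 - c) / (1 + b2 * x) :=
    div_pos (mul_pos (mul_pos (mul_pos (by norm_num) hx) hk) (by linarith)) hQ
  have hC : 0 < k * (1 - x) * (1 + b1 * x) /
      ((1 + b2 * x) * ((1 + b1 * x) + a1)) :=
    div_pos (mul_pos (mul_pos hk (by linarith)) hP) (mul_pos hQ (by linarith))
  have hkey : (2 * (k * S) + B)^2 - (B^2 + 4 * x * k * (1 - c) / (1 + b2 * x)) =
      4 * (k * (1 - x) * (1 + b1 * x) / ((1 + b2 * x) * ((1 + b1 * x) + a1))) *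
        (k * S - x * a1 / (1 + b1 * x)) := by
    rw [hS, hB]
    have hPA : (0:ℝ) < (1 + b1 * x) + a1 := by linarith
    field_simp
    ring
  have hgoal : 2 * k * S + (1 - k / (1 + b2 * x)) * x + k * c / (1 + b2 * x) =
      2 * (k * S) + B := by rw [hB]; ring
  rw [hgoal]
  exact aux_sqrt_equiv (k * S) B _ _ _ hC hBpos hT hd hkey
end

section
/- Let 0 < c < 1, 0 < k ≤ 1, b2 > 0, and let 0 < x⋆ < 1 with x⋆ > c. Define ã2 = (−(1 − k/(1+b2·x⋆))·x⋆ − k·c/(1+b2·x⋆) + √(((1 − k/(1+b2·x⋆))·x⋆ + k·c/(1+b2·x⋆))² + 4·x⋆·k·(1−c)/(1+b2·x⋆)))·(1+b2·x⋆)/(2·x⋆). Then ã2 ≤ (1−c)/c. -/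
theorem stmt_11 (b2 c k x : ℝ)
    (hc : 0 < c) (hc1 : c < 1) (hk : 0 < k) (hk1 : k ≤ 1)
    (hb2 : 0 < b2) (hx : 0 < x) (hx1 : x < 1) (hxc : x > c) :
    (-(1 - k / (1 + b2 * x)) * x - k * c / (1 + b2 * x) +
        Real.sqrt (((1 - k / (1 + b2 * x)) * x + k * c / (1 + b2 * x)) ^ 2 +
          4 * x * k * (1 - c) / (1 + b2 * x))) *
      (1 + b2 * x) / (2 * x) ≤ (1 - c) / c := by
  have hB : (1:ℝ) < 1 + b2 * x := by nlinarith
  set B := 1 + b2 * x with hBdef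
  clear_value B
  have hB0 : (0:ℝ) < B := by linarith
  have hkB : k / B < 1 := (div_lt_one hB0).mpr (by linarith)
  set w := (1 - k / B) * x + k * c / B with hwdef
  clear_value w
  set u := 4 * x * k * (1 - c) / B with hudef
  clear_value u
  have hw0 : 0 < w := by
    have h1 : 0 < (1 - k / B) * x := mul_pos (by linarith) hx
    have h2 : 0 < k * c / B := by positivity
    linarith [hwdef]
  have hu0 : 0 < u := by
    have h1c : (0:ℝ) < 1 - c := by linarith
    rw [hudef]; positivity
  have hsq : Real.sqrt (w ^ 2 + u) ≤ w + u / (2 * w) := by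
    have hnn : 0 ≤ w + u / (2 * w) := by positivity
    rw [show w + u / (2 * w) = Real.sqrt ((w + u / (2 * w)) ^ 2) from
      (Real.sqrt_sq hnn).symm]
    apply Real.sqrt_le_sqrt
    have key : 2 * w * (u / (2 * w)) = u := mul_div_cancel₀ u (by positivity)
    nlinarith [sq_nonneg (u / (2 * w))]
  have hwc : c ≤ w := by
    have : 0 ≤ (1 - k / B) * (x - c) := by nlinarith
    have hexp : w = c + (1 - k / B) * (x - c) := by
      rw [hwdef]; field_simp; ring
    linarith [hexp]
  have hstep1 : (-(1 - k / B) * x - k * c / B +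
      Real.sqrt (w ^ 2 + u)) * B / (2 * x)
      ≤ (-w + (w + u / (2 * w))) * B / (2 * x) := by
    have h1 : -(1 - k / B) * x - k * c / B = -w := by rw [hwdef]; ring
    rw [h1]
    apply div_le_div_of_nonneg_right ?_ (by linarith)
    apply mul_le_mul_of_nonneg_right (by linarith) (by linarith)
  refine hstep1.trans ?_
  have hsimp : (-w + (w + u / (2 * w))) * B / (2 * x) = k * (1 - c) / w := by
    rw [hudef]; field_simp; ring
  rw [hsimp, div_le_div_iff₀ hw0 hc]
  nlinarith [mul_le_mul_of_nonneg_left hwc (le_of_lt hk), mul_pos hc (sub_pos.mpr hc1)]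
end

section
/- Let a1, b1 > 0, 0 < c < 1, 0 < k < 1, 0 < x⋆ < 1, and set â2 = (1−c)/c, č2 = k·(1−c), and ă2 = (k·(1−x⋆) − k·(c−x⋆)·(1 + a1/(1+b1·x⋆)))/(x⋆·(1 + a1/(1+b1·x⋆))). If x⋆ > (a1 − â2)/(b1·â2) then č2 < ă2, and if x⋆ < (a1 − â2)/(b1·â2) then č2 > ă2. -/
/-! With `A = 1 + a1 / (1 + b1 x⋆)`, both differences factor through `1 - c A`:
`ă2 - č2 = k (1 - x⋆) / (x⋆ A) · (1 - c A)` and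
`x⋆ - (a1 - â2) / (b1 â2) = (1 + b1 x⋆) / (b1 (1 - c)) · (1 - c A)`,
with positive first factors. So both have the sign of `1 - c A`. -/

lemma div_sub_mul_one_sub_eq (k x c A : ℝ) (hx : x ≠ 0) (hA : A ≠ 0) :
    (k * (1 - x) - k * (c - x) * A) / (x * A) - k * (1 - c) =
      k * (1 - x) / (x * A) * (1 - c * A) := by
  field_simp
  ring

lemma sub_div_one_sub_div_eq (a b c x : ℝ) (hb : b ≠ 0) (hc : c ≠ 0) (hc1 : c ≠ 1)
    (hbx : 1 + b * x ≠ 0) :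
    x - (a - (1 - c) / c) / (b * ((1 - c) / c)) =
      (1 + b * x) / (b * (1 - c)) * (1 - c * (1 + a / (1 + b * x))) := by
  have : 1 - c ≠ 0 := sub_ne_zero.2 hc1.symm
  -- `field_simp` rewrites `b * x` to `x * b`, after which `hbx` would no longer apply
  rw [mul_comm b x] at hbx ⊢
  field_simp
  ring

theorem stmt_12_general (a1 b1 c k x : ℝ)
    (ha1 : 0 < a1) (hb1 : 0 < b1)
    (hc : 0 < c) (hc1 : c < 1) (hk : 0 < k)
    (hx : 0 < x) (hx1 : x < 1) :
    (x > (a1 - (1 - c) / c) / (b1 * ((1 - c) / c)) →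
      k * (1 - c) <
        (k * (1 - x) - k * (c - x) * (1 + a1 / (1 + b1 * x))) /
          (x * (1 + a1 / (1 + b1 * x)))) ∧
    (x < (a1 - (1 - c) / c) / (b1 * ((1 - c) / c)) →
      k * (1 - c) >
        (k * (1 - x) - k * (c - x) * (1 + a1 / (1 + b1 * x))) /
          (x * (1 + a1 / (1 + b1 * x)))) := by
  have hbx : 0 < 1 + b1 * x := by positivity
  set A := 1 + a1 / (1 + b1 * x)
  have hA : 0 < A := by positivity
  have hgap_factor : 0 < k * (1 - x) / (x * A) := by
    have := sub_pos.2 hx1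
    positivity
  have hthreshold_factor : 0 < (1 + b1 * x) / (b1 * (1 - c)) := by
    have := sub_pos.2 hc1
    positivity
  have hgap := div_sub_mul_one_sub_eq k x c A hx.ne' hA.ne'
  have hthreshold := sub_div_one_sub_div_eq a1 b1 c x hb1.ne' hc.ne' hc1.ne hbx.ne'
  refine ⟨fun h => ?_, fun h => ?_⟩
  · have hcA : 0 < 1 - c * A :=
      pos_of_mul_pos_right (hthreshold ▸ sub_pos.2 h) hthreshold_factor.le
    linarith [mul_pos hgap_factor hcA]
  · have hcA : 1 - c * A < 0 :=
      neg_of_mul_neg_right (hthreshold ▸ sub_neg.2 h) hthreshold_factor.le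
    linarith [mul_neg_of_pos_of_neg hgap_factor hcA]

theorem stmt_12 (a1 b1 c k x : ℝ)
    (ha1 : 0 < a1) (hb1 : 0 < b1)
    (hc : 0 < c) (hc1 : c < 1) (hk : 0 < k) (hk1 : k < 1)
    (hx : 0 < x) (hx1 : x < 1) :
    (x > (a1 - (1 - c) / c) / (b1 * ((1 - c) / c)) →
      k * (1 - c) <
        (k * (1 - x) - k * (c - x) * (1 + a1 / (1 + b1 * x))) /
          (x * (1 + a1 / (1 + b1 * x)))) ∧
    (x < (a1 - (1 - c) / c) / (b1 * ((1 - c) / c)) →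
      k * (1 - c) >
        (k * (1 - x) - k * (c - x) * (1 + a1 / (1 + b1 * x))) /
          (x * (1 + a1 / (1 + b1 * x)))) :=
  stmt_12_general a1 b1 c k x ha1 hb1 hc hc1 hk hx hx1
end

section
/- Let 0 < c < 1, 0 < k < 1, b2 > 0, and define q(x) = k·c·(a2 − (1−c)/c) + (a2 − (k−1))·a2·x − b2·k·(1−c)·x + a2·b2·x² for a parameter a2 > 0. Then q(0)·q(1) < 0 if and only if k·(1−c) < a2 < (1−c)/c; in particular, under this condition q has exactly one root in the open unit interval (0,1). -/
theorem stmt_14 (b2 c k a2 : ℝ)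
    (hc : 0 < c) (hc1 : c < 1) (hk : 0 < k) (hk1 : k < 1)
    (hb2 : 0 < b2) (ha2 : 0 < a2) :
    ((k * c * (a2 - (1 - c) / c) + ((a2 - (k - 1)) * a2 - b2 * k * (1 - c)) * 0 +
        a2 * b2 * 0 ^ 2) *
      (k * c * (a2 - (1 - c) / c) + ((a2 - (k - 1)) * a2 - b2 * k * (1 - c)) * 1 +
        a2 * b2 * 1 ^ 2) < 0 ↔
      (k * (1 - c) < a2 ∧ a2 < (1 - c) / c)) ∧
    ((k * (1 - c) < a2 ∧ a2 < (1 - c) / c) →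
      ∃! x : ℝ, x ∈ Set.Ioo (0 : ℝ) 1 ∧
        k * c * (a2 - (1 - c) / c) + ((a2 - (k - 1)) * a2 - b2 * k * (1 - c)) * x +
          a2 * b2 * x ^ 2 = 0) := by
  have hcne : c ≠ 0 := ne_of_gt hc
  have e0 : k * c * (a2 - (1 - c) / c) + ((a2 - (k - 1)) * a2 - b2 * k * (1 - c)) * 0 +
      a2 * b2 * 0 ^ 2 = k * (c * a2 - (1 - c)) := by
    field_simp; ring
  have e1 : k * c * (a2 - (1 - c) / c) + ((a2 - (k - 1)) * a2 - b2 * k * (1 - c)) * 1 +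
      a2 * b2 * 1 ^ 2 = (a2 + b2 + 1) * (a2 - k * (1 - c)) := by
    field_simp; ring
  have hlt : a2 < (1 - c) / c ↔ c * a2 - (1 - c) < 0 := by
    rw [lt_div_iff₀ hc]
    constructor <;> intro h <;> nlinarith
  have hS : (0:ℝ) < a2 + b2 + 1 := by linarith
  -- P := c*a2 - (1-c), Q := a2 - k*(1-c), and P < c*Q
  have hck : c * k < 1 := by nlinarith
  have hPcQ : c * a2 - (1 - c) < c * (a2 - k * (1 - c)) := by
    nlinarith [mul_pos (sub_pos.mpr hc1) (sub_pos.mpr hck)]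
  constructor
  · rw [e0, e1]
    constructor
    · intro h
      have hPQ : (c * a2 - (1 - c)) * (a2 - k * (1 - c)) < 0 := by
        by_contra hge
        push_neg at hge
        nlinarith [mul_nonneg (mul_pos hk hS).le hge]
      have hQ : 0 < a2 - k * (1 - c) := by
        by_contra hQ'
        push_neg at hQ'
        have hP : c * a2 - (1 - c) < 0 := by nlinarith
        nlinarith
      constructor
      · linarith
      · rw [hlt]
        nlinarith
    · rintro ⟨h1, h2⟩
      have hP : c * a2 - (1 - c) < 0 := hlt.mp h2
      have hQ : 0 < a2 - k * (1 - c) := by linarith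
      nlinarith [mul_pos hS hQ, mul_pos hk (mul_pos hS hQ)]
  · rintro ⟨h1, h2⟩
    have hP : c * a2 - (1 - c) < 0 := hlt.mp h2
    have hQ : 0 < a2 - k * (1 - c) := by linarith
    set f : ℝ → ℝ := fun x => k * c * (a2 - (1 - c) / c) +
        ((a2 - (k - 1)) * a2 - b2 * k * (1 - c)) * x + a2 * b2 * x ^ 2 with hf
    have hf0 : f 0 < 0 := by
      show k * c * (a2 - (1 - c) / c) + ((a2 - (k - 1)) * a2 - b2 * k * (1 - c)) * 0 +
        a2 * b2 * 0 ^ 2 < 0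
      rw [e0]; nlinarith
    have hf1 : 0 < f 1 := by
      show 0 < k * c * (a2 - (1 - c) / c) + ((a2 - (k - 1)) * a2 - b2 * k * (1 - c)) * 1 +
        a2 * b2 * 1 ^ 2
      rw [e1]; positivity
    have hcont : Continuous f := by
      apply Continuous.add
      apply Continuous.add
      · exact continuous_const
      · exact (continuous_const.mul continuous_id)
      · exact (continuous_const.mul (continuous_pow 2))
    have hsub := intermediate_value_Ioo (zero_le_one) hcont.continuousOn (a := (0:ℝ)) (b := 1)
    have h0mem : (0:ℝ) ∈ Set.Ioo (f 0) (f 1) := ⟨hf0, hf1⟩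
    obtain ⟨x, hx, hfx⟩ := hsub h0mem
    refine ⟨x, ⟨hx, hfx⟩, ?_⟩
    rintro y ⟨hy, hfy⟩
    by_contra hne
    have hxy : y - x ≠ 0 := sub_ne_zero.mpr hne
    have hfac : (y - x) * (a2 * b2 * (y + x) + ((a2 - (k - 1)) * a2 - b2 * k * (1 - c))) = 0 := by
      linear_combination hfy - hfx
    have hB : a2 * b2 * (y + x) + ((a2 - (k - 1)) * a2 - b2 * k * (1 - c)) = 0 :=
      (mul_eq_zero.mp hfac).resolve_left hxy
    have hC : k * c * (a2 - (1 - c) / c) = a2 * b2 * (x * y) := by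
      linear_combination hfy - y * hB
    have hCneg : k * c * (a2 - (1 - c) / c) < 0 := by
      have := e0
      nlinarith
    have hpos : 0 < a2 * b2 * (x * y) :=
      mul_pos (mul_pos ha2 hb2) (mul_pos hx.1 hy.1)
    linarith [hC ▸ hCneg]
end

section
/- Let 0 < c < 1, 0 < k < 1, b2 > 0. Define a2⁺ = (−(1−k) + √((1−k)² + 4·b2·k·(1−c)))/2 and under-a2 = (−(1−k+b2) + √((1−k+b2)² + 4·b2·k·(1−c)))/2. Then under-a2 < (1−c)/c. -/
theorem stmt_15 (b2 c k : ℝ)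
    (hc : 0 < c) (hc1 : c < 1) (hk : 0 < k) (hk1 : k < 1) (hb2 : 0 < b2) :
    (-(1 - k + b2) + Real.sqrt ((1 - k + b2) ^ 2 + 4 * b2 * k * (1 - c))) / 2 <
      (1 - c) / c := by
  set w : ℝ := 1 - k + b2 with hw
  have hwpos : 0 < w := by simp [hw]; nlinarith
  set u : ℝ := 4 * b2 * k * (1 - c) with hu
  have hupos : 0 < u := by have := mul_pos (mul_pos (mul_pos (by norm_num : (0:ℝ)<4) hb2) hk) (by linarith : (0:ℝ) < 1 - c); linarith [this]
  have hb : Real.sqrt (w ^ 2 + u) ≤ w + u / (2 * w) := by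
    rw [show w + u / (2 * w) = Real.sqrt ((w + u / (2 * w)) ^ 2) by
      rw [Real.sqrt_sq]; positivity]
    apply Real.sqrt_le_sqrt
    have h2w : (0:ℝ) < 2 * w := by positivity
    rw [add_sq]
    have : 2 * w * (u / (2 * w)) = u := by field_simp
    nlinarith [sq_nonneg (u / (2 * w))]
  have key : b2 * k * c < w := by nlinarith
  have h1 : (-w + Real.sqrt (w ^ 2 + u)) / 2 ≤ u / (4 * w) := by
    have e : u / (4 * w) = (u / (2 * w)) / 2 := by rw [div_div]; ring_nf
    rw [e]; linarith
  have h2 : u / (4 * w) < (1 - c) / c := by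
    rw [div_lt_div_iff₀ (by positivity) hc]
    nlinarith
  linarith
end

section
/- Let 0 < c < 1, 0 < k < 1, b2 > 0, and suppose a2⁺ := (−(1−k) + √((1−k)² + 4·b2·k·(1−c)))/2 > (1−c)/c. Then c·b2 > 1/k − 1. -/
theorem stmt_16 (b2 c k : ℝ)
    (hc : 0 < c) (hc1 : c < 1) (hk : 0 < k) (hk1 : k < 1) (hb2 : 0 < b2)
    (h : (-(1 - k) + Real.sqrt ((1 - k) ^ 2 + 4 * b2 * k * (1 - c))) / 2 >
      (1 - c) / c) :
    c * b2 > 1 / k - 1 := by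
  set s := Real.sqrt ((1 - k) ^ 2 + 4 * b2 * k * (1 - c)) with hs
  have harg : (0:ℝ) ≤ (1 - k) ^ 2 + 4 * b2 * k * (1 - c) := by nlinarith [sq_nonneg (1 - k), mul_pos (mul_pos hb2 hk) (show (0:ℝ) < 1 - c by linarith)]
  have hsq : s ^ 2 = (1 - k) ^ 2 + 4 * b2 * k * (1 - c) := Real.sq_sqrt harg
  have hs0 : 0 ≤ s := Real.sqrt_nonneg _
  have h1 : (1 - c) / c * 2 < -(1 - k) + s := by linarith
  have h2 : 1 - c < c * ((-(1 - k) + s) / 2) := by nlinarith [(div_lt_iff₀ hc).mp h]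
  have h3 : 2 * (1 - c) + c * (1 - k) < c * s := by nlinarith
  have hA : (0:ℝ) < 2 * (1 - c) + c * (1 - k) := by nlinarith
  have h4 : (2 * (1 - c) + c * (1 - k)) ^ 2 < (c * s) ^ 2 := by nlinarith
  have h5 : (c * s) ^ 2 = c ^ 2 * ((1 - k) ^ 2 + 4 * b2 * k * (1 - c)) := by
    rw [mul_pow, hsq]
  rw [gt_iff_lt, sub_lt_iff_lt_add, div_lt_iff₀ hk]
  nlinarith [sq_nonneg (1 - c), mul_pos hc hk]
end

section
/- Let a1, b1, b2 > 0 with b1 > b2, and let 0 < x⋆ < 1 and a2 > 0 satisfy a1 − a2 > (a2·b1 − a1·b2)·x⋆ (which under b1 > b2 implies a2 < a1). Then a1·b1 − a2·b2 + a1·a2·(b1−b2) + 2·b1·b2·(a1−a2)·x⋆ − b1·b2·(a2·b1 − a1·b2)·x⋆² > 0. -/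
theorem stmt_19 (a1 a2 b1 b2 x : ℝ)
    (ha1 : 0 < a1) (hb1 : 0 < b1) (hb2 : 0 < b2) (hb : b1 > b2)
    (hx : 0 < x) (hx1 : x < 1) (ha2 : 0 < a2)
    (hloc : a1 - a2 > (a2 * b1 - a1 * b2) * x) :
    a1 * b1 - a2 * b2 + a1 * a2 * (b1 - b2) + 2 * b1 * b2 * (a1 - a2) * x -
      b1 * b2 * (a2 * b1 - a1 * b2) * x ^ 2 > 0 := by
  have ha : a2 < a1 := by nlinarith [mul_pos hx (mul_pos ha2 (sub_pos.2 hb)), mul_pos hx hb2]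
  nlinarith [mul_pos (mul_pos hb1 hb2) hx, mul_pos (mul_pos (mul_pos hb1 hb2) hx) (sub_pos.2 ha),
    mul_lt_mul_of_pos_left hloc (mul_pos (mul_pos hb1 hb2) hx),
    mul_pos ha1 (sub_pos.2 hb), mul_pos (sub_pos.2 ha) hb2]
end
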